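/- Let n ≥ 2 and let u ∈ W^{1,2}(B₁ⁿ, ℝ^m). Then ∫_{{(x,t) : 0 < t < 1, t² < |x| < t}} |du((t²/|x|)·(x/|x|))|² · (t⁴/|x|⁴) dH^{n+1}(x,t) ≤ c(n) ∫_{B₁} |du|² dHⁿ, where c(n) depends only on n. -/

import Mathlib

open MeasureTheory Metric Set Filter Topology
open scoped ENNReal RealInnerProductSpace NNReal

noncomputable section

/-- `ℝⁿ` modeled as the Euclidean space `EuclideanSpace ℝ (Fin n)`. -/
abbrev Euc (n : ℕ) : Type := EuclideanSpace ℝ (Fin n)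

/-- `du` is a weak (distributional) differential of `u` on the set `Ω`:
integration by parts against all smooth, compactly supported test functions
supported in `Ω` holds. -/
def HasWeakFDerivOn {E F : Type*} [NormedAddCommGroup E] [NormedSpace ℝ E] [MeasureSpace E]
    [NormedAddCommGroup F] [NormedSpace ℝ F] [CompleteSpace F]
    (u : E → F) (du : E → E →L[ℝ] F) (Ω : Set E) : Prop :=
  ∀ φ : E → ℝ, ContDiff ℝ (⊤ : ℕ∞) φ → HasCompactSupport φ → tsupport φ ⊆ Ω →
    ∀ y : E, ∫ x in Ω, φ x • du x y = - ∫ x in Ω, (fderiv ℝ φ x y) • u x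

/-- Membership in the Sobolev space `W^{1,2}(Ω, F)`: `u` and its weak
differential `du` are square integrable on `Ω`, and `du` is a weak differential of `u`. -/
def MemW12 {E F : Type*} [NormedAddCommGroup E] [NormedSpace ℝ E] [MeasureSpace E]
    [NormedAddCommGroup F] [NormedSpace ℝ F] [CompleteSpace F]
    (Ω : Set E) (u : E → F) (du : E → E →L[ℝ] F) : Prop :=
  MemLp u 2 (volume.restrict Ω) ∧ MemLp (fun x => ‖du x‖) 2 (volume.restrict Ω) ∧
    HasWeakFDerivOn u du Ω

namespace InvAux

variable {n : ℕ}

def invMap (t : ℝ) (x : Euc n) : Euc n := (t ^ 2 / ‖x‖ ^ 2) • x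

def invDeriv (t : ℝ) (x : Euc n) : Euc n →L[ℝ] Euc n :=
  (t ^ 2 / ‖x‖ ^ 2) • (ContinuousLinearMap.id ℝ (Euc n)
    - (2 / ‖x‖ ^ 2) • ((innerSL ℝ x).smulRight x))

lemma hasFDerivAt_invMap (t : ℝ) {x : Euc n} (hx : x ≠ 0) :
    HasFDerivAt (invMap t) (invDeriv t x) x := by
  have hx0 : ‖x‖ ≠ 0 := norm_ne_zero_iff.mpr hx
  have hns : ‖x‖ ^ 2 ≠ 0 := pow_ne_zero _ hx0
  have h1 : HasFDerivAt (fun y : Euc n => ‖y‖ ^ 2) (2 • innerSL ℝ x) x :=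
    (hasStrictFDerivAt_norm_sq x).hasFDerivAt
  have h2 : HasDerivAt (fun y : ℝ => t ^ 2 * y⁻¹) (t ^ 2 * (-((‖x‖ ^ 2) ^ 2)⁻¹)) (‖x‖ ^ 2) :=
    (hasDerivAt_inv hns).const_mul (t ^ 2)
  have h3 : HasFDerivAt (fun y : Euc n => t ^ 2 * (‖y‖ ^ 2)⁻¹)
      ((t ^ 2 * (-((‖x‖ ^ 2) ^ 2)⁻¹)) • (2 • innerSL ℝ x)) x :=
    by have := h2.comp_hasFDerivAt x h1; exact this
  have h4 := h3.smul (hasFDerivAt_id x)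
  have heq : invMap (n := n) t = fun y : Euc n => (t ^ 2 * (‖y‖ ^ 2)⁻¹) • y := by
    funext y; simp [invMap, div_eq_mul_inv]
  rw [heq]
  refine h4.congr_fderiv (Eq.symm ?_)
  refine ContinuousLinearMap.ext fun v => ?_
  simp only [invDeriv, ContinuousLinearMap.smul_apply, ContinuousLinearMap.sub_apply,
    ContinuousLinearMap.coe_id', id_eq, ContinuousLinearMap.add_apply,
    ContinuousLinearMap.smulRight_apply, innerSL_apply_apply, ContinuousLinearMap.coe_smul',
    Pi.smul_apply]
  simp only [smul_eq_mul, nsmul_eq_mul]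
  match_scalars
  · field_simp
  · field_simp


lemma abs_det_invDeriv (t : ℝ) {x : Euc n} (hx : x ≠ 0) :
    |(invDeriv t x).det| = (t ^ 2 / ‖x‖ ^ 2) ^ n := by
  have hx0 : ‖x‖ ≠ 0 := norm_ne_zero_iff.mpr hx
  have hns : ‖x‖ ^ 2 ≠ 0 := pow_ne_zero _ hx0
  set T : Euc n →L[ℝ] Euc n := ContinuousLinearMap.id ℝ (Euc n)
    - (2 / ‖x‖ ^ 2) • ((innerSL ℝ x).smulRight x) with hT
  have hTT : T.comp T = ContinuousLinearMap.id ℝ (Euc n) := by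
    refine ContinuousLinearMap.ext fun v => ?_
    simp only [hT, ContinuousLinearMap.comp_apply, ContinuousLinearMap.sub_apply,
      ContinuousLinearMap.coe_id', id_eq, ContinuousLinearMap.smul_apply,
      ContinuousLinearMap.smulRight_apply, innerSL_apply_apply, inner_sub_right, inner_smul_right,
      real_inner_self_eq_norm_sq]
    match_scalars
    · ring
    · field_simp; ring
  have hdet2 : T.det * T.det = 1 := by
    have h := congrArg ContinuousLinearMap.det hTT
    rwa [ContinuousLinearMap.det, ContinuousLinearMap.toLinearMap_comp, LinearMap.det_comp,
      ContinuousLinearMap.det, ContinuousLinearMap.coe_id, LinearMap.det_id] at h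
  have habs : |T.det| = 1 := by rcases mul_self_eq_one_iff.mp hdet2 with h | h <;> simp [h]
  have hsm : invDeriv t x = (t ^ 2 / ‖x‖ ^ 2) • T := rfl
  rw [hsm, ContinuousLinearMap.det, ContinuousLinearMap.coe_smul, LinearMap.det_smul,
    abs_mul, abs_pow, ← ContinuousLinearMap.det, habs, mul_one,
    finrank_euclideanSpace_fin, abs_of_nonneg (by positivity)]

lemma invMap_invMap (t : ℝ) (ht : 0 < t) {x : Euc n} (hx : x ≠ 0) :
    invMap t (invMap t x) = x := by
  have hx0 : (0:ℝ) < ‖x‖ := norm_pos_iff.mpr hx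
  have hc : (0:ℝ) < t ^ 2 / ‖x‖ ^ 2 := by positivity
  have hnorm : ‖invMap t x‖ = t ^ 2 / ‖x‖ := by
    rw [invMap, norm_smul, Real.norm_eq_abs, abs_of_pos hc]
    field_simp
  rw [invMap, hnorm, invMap, smul_smul, div_pow]
  have hone : t ^ 2 / ((t ^ 2) ^ 2 / ‖x‖ ^ 2) * (t ^ 2 / ‖x‖ ^ 2) = 1 := by
    field_simp
  rw [hone, one_smul]

lemma measurableSet_ann (t : ℝ) : MeasurableSet {x : Euc n | t ^ 2 < ‖x‖ ∧ ‖x‖ < t} := by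
  have h1 : MeasurableSet {x : Euc n | t ^ 2 < ‖x‖} :=
    measurableSet_lt measurable_const measurable_norm
  have h2 : MeasurableSet {x : Euc n | ‖x‖ < t} :=
    measurableSet_lt measurable_norm measurable_const
  exact (h1.inter h2)

lemma core (hn : 2 ≤ n) {m : ℕ} (du : Euc n → Euc n →L[ℝ] Euc m) {t : ℝ}
    (ht0 : 0 < t) (ht1 : t < 1) :
    ∫⁻ x in {x : Euc n | t ^ 2 < ‖x‖ ∧ ‖x‖ < t},
        ENNReal.ofReal (‖du ((t ^ 2 / ‖x‖ ^ 2) • x)‖ ^ 2 * (t ^ 4 / ‖x‖ ^ 4)) ≤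
      ∫⁻ y in Metric.ball (0 : Euc n) 1, ENNReal.ofReal (‖du y‖ ^ 2) := by
  set s : Set (Euc n) := {x : Euc n | t ^ 2 < ‖x‖ ∧ ‖x‖ < t} with hs_def
  have hs : MeasurableSet s := measurableSet_ann t
  have hxne : ∀ x ∈ s, x ≠ 0 := by
    intro x hx h0
    rw [h0] at hx
    simp only [hs_def, Set.mem_setOf_eq, norm_zero] at hx
    nlinarith [hx.1]
  set g : Euc n → ℝ≥0∞ := fun y => ENNReal.ofReal (‖du y‖ ^ 2) with hg
  have hderiv : ∀ x ∈ s, HasFDerivWithinAt (invMap t) (invDeriv t x) s x :=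
    fun x hx => (hasFDerivAt_invMap t (hxne x hx)).hasFDerivWithinAt
  have hinj : Set.InjOn (invMap t) s := by
    intro a ha b hb hab
    have := congrArg (invMap t) hab
    rwa [invMap_invMap t ht0 (hxne a ha), invMap_invMap t ht0 (hxne b hb)] at this
  have key := lintegral_image_eq_lintegral_abs_det_fderiv_mul volume hs hderiv hinj g
  calc
    ∫⁻ x in s, ENNReal.ofReal (‖du ((t ^ 2 / ‖x‖ ^ 2) • x)‖ ^ 2 * (t ^ 4 / ‖x‖ ^ 4))
        ≤ ∫⁻ x in s, ENNReal.ofReal |(invDeriv t x).det| * g (invMap t x) := by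
      refine lintegral_mono_ae ((ae_restrict_mem hs).mono fun x hx => ?_)
      have hx0 : (0:ℝ) < ‖x‖ := lt_trans (by positivity) hx.1
      have hb1 : (1:ℝ) ≤ t ^ 2 / ‖x‖ ^ 2 := by
        rw [le_div_iff₀ (by positivity), one_mul]
        nlinarith [hx.2, hx0]
      have hdet : |(invDeriv t x).det| = (t ^ 2 / ‖x‖ ^ 2) ^ n :=
        abs_det_invDeriv t (hxne x hx)
      have hw : t ^ 4 / ‖x‖ ^ 4 = (t ^ 2 / ‖x‖ ^ 2) ^ 2 := by
        rw [div_pow]; ring_nf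
      have hineq : ‖du ((t ^ 2 / ‖x‖ ^ 2) • x)‖ ^ 2 * (t ^ 4 / ‖x‖ ^ 4)
          ≤ |(invDeriv t x).det| * ‖du (invMap t x)‖ ^ 2 := by
        rw [hdet, hw, invMap]
        have hpow : (t ^ 2 / ‖x‖ ^ 2) ^ 2 ≤ (t ^ 2 / ‖x‖ ^ 2) ^ n :=
          pow_le_pow_right₀ hb1 hn
        nlinarith [sq_nonneg ‖du ((t ^ 2 / ‖x‖ ^ 2) • x)‖]
      calc ENNReal.ofReal (‖du ((t ^ 2 / ‖x‖ ^ 2) • x)‖ ^ 2 * (t ^ 4 / ‖x‖ ^ 4))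
          ≤ ENNReal.ofReal (|(invDeriv t x).det| * ‖du (invMap t x)‖ ^ 2) :=
            ENNReal.ofReal_le_ofReal hineq
        _ = ENNReal.ofReal |(invDeriv t x).det| * g (invMap t x) :=
            ENNReal.ofReal_mul (abs_nonneg _)
    _ = ∫⁻ y in invMap t '' s, g y := key.symm
    _ ≤ ∫⁻ y in Metric.ball (0 : Euc n) 1, g y := by
      refine lintegral_mono_set ?_
      rintro y ⟨x, hx, rfl⟩
      have hx0 : (0:ℝ) < ‖x‖ := lt_trans (by positivity) hx.1
      rw [Metric.mem_ball, dist_zero_right, invMap, norm_smul, Real.norm_eq_abs,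
        abs_of_pos (by positivity)]
      have : t ^ 2 / ‖x‖ ^ 2 * ‖x‖ = t ^ 2 / ‖x‖ := by field_simp
      rw [this]
      rw [div_lt_one hx0]
      exact hx.1

lemma lintegral_prod_le_symm {α β : Type*} [MeasurableSpace α] [MeasurableSpace β]
    (μ : Measure α) (ν : Measure β) [SFinite μ] [SFinite ν] (f : α × β → ℝ≥0∞) :
    ∫⁻ z, f z ∂(μ.prod ν) ≤ ∫⁻ y, ∫⁻ x, f (x, y) ∂μ ∂ν := by
  rw [MeasureTheory.lintegral_def]
  refine iSup₂_le fun g hg => ?_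
  calc g.lintegral (μ.prod ν) = ∫⁻ z, g z ∂(μ.prod ν) := (g.lintegral_eq_lintegral _).symm
    _ = ∫⁻ y, ∫⁻ x, g (x, y) ∂μ ∂ν := lintegral_prod_symm _ g.measurable.aemeasurable
    _ ≤ ∫⁻ y, ∫⁻ x, f (x, y) ∂μ ∂ν :=
        lintegral_mono fun y => lintegral_mono fun x => hg _

end InvAux

/-- For `u ∈ W^{1,2}(B₁ⁿ, ℝᵐ)` with weak differential `du`, the energy of the
inversion part of the gluing construction over `{(x,t) : 0 < t < 1, t² < |x| < t}` is bounded
by `c(n)` times the Dirichlet energy of `u` on `B₁`, where `c(n)` depends only on `n`. -/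
theorem lintegral_inversion_energy_le (n : ℕ) (hn : 2 ≤ n) :
    ∃ c : ℝ, 0 < c ∧
      ∀ (m : ℕ) (u : Euc n → Euc m) (du : Euc n → Euc n →L[ℝ] Euc m),
        MemW12 (Metric.ball (0 : Euc n) 1) u du →
        ∫⁻ p : Euc n × ℝ in
            {p : Euc n × ℝ | p.2 ∈ Set.Ioo (0:ℝ) 1 ∧ p.2 ^ 2 < ‖p.1‖ ∧ ‖p.1‖ < p.2},
            ENNReal.ofReal (‖du ((p.2 ^ 2 / ‖p.1‖ ^ 2) • p.1)‖ ^ 2 * (p.2 ^ 4 / ‖p.1‖ ^ 4)) ≤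
          ENNReal.ofReal c * ∫⁻ x in Metric.ball (0 : Euc n) 1, ENNReal.ofReal (‖du x‖ ^ 2) := by
  refine ⟨1, one_pos, fun m u du _ => ?_⟩
  set F : Euc n × ℝ → ℝ≥0∞ := fun p =>
    ENNReal.ofReal (‖du ((p.2 ^ 2 / ‖p.1‖ ^ 2) • p.1)‖ ^ 2 * (p.2 ^ 4 / ‖p.1‖ ^ 4)) with hF
  set S : Set (Euc n × ℝ) :=
    {p : Euc n × ℝ | p.2 ∈ Set.Ioo (0:ℝ) 1 ∧ p.2 ^ 2 < ‖p.1‖ ∧ ‖p.1‖ < p.2} with hS_def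
  set E : ℝ≥0∞ := ∫⁻ x in Metric.ball (0 : Euc n) 1, ENNReal.ofReal (‖du x‖ ^ 2) with hE
  have hS : MeasurableSet S := by
    have hn1 : Measurable fun p : Euc n × ℝ => ‖p.1‖ := measurable_fst.norm
    have hn2 : Measurable fun p : Euc n × ℝ => p.2 := measurable_snd
    have : S = ({p : Euc n × ℝ | 0 < p.2} ∩ {p | p.2 < 1}) ∩
        ({p | p.2 ^ 2 < ‖p.1‖} ∩ {p | ‖p.1‖ < p.2}) := by
      ext p; simp [hS_def, Set.mem_Ioo, and_assoc]
    rw [this]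
    exact ((measurableSet_lt measurable_const hn2).inter
        (measurableSet_lt hn2 measurable_const)).inter
      ((measurableSet_lt (hn2.pow_const 2) hn1).inter (measurableSet_lt hn1 hn2))
  calc ∫⁻ p in S, F p = ∫⁻ p, S.indicator F p := (lintegral_indicator hS F).symm
    _ = ∫⁻ p, S.indicator F p ∂((volume : Measure (Euc n)).prod volume) := by
        rw [← Measure.volume_eq_prod]
    _ ≤ ∫⁻ t, ∫⁻ x, S.indicator F (x, t) ∂volume ∂volume :=
        InvAux.lintegral_prod_le_symm _ _ _
    _ ≤ ∫⁻ t : ℝ, (Set.Ioo (0:ℝ) 1).indicator (fun _ => E) t := by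
        refine lintegral_mono fun t => ?_
        by_cases ht : t ∈ Set.Ioo (0:ℝ) 1
        · have hrw : ∀ x : Euc n, S.indicator F (x, t)
              = ({x : Euc n | t ^ 2 < ‖x‖ ∧ ‖x‖ < t}).indicator (fun x => F (x, t)) x := by
            intro x
            simp only [Set.indicator_apply, hS_def, Set.mem_setOf_eq, ht, true_and]
          simp only [hrw]
          rw [lintegral_indicator (InvAux.measurableSet_ann t) _,
            Set.indicator_of_mem ht]
          exact InvAux.core hn du ht.1 ht.2
        · have hzero : ∀ x : Euc n, S.indicator F (x, t) = 0 := by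
            intro x
            apply Set.indicator_of_notMem
            simp only [hS_def, Set.mem_setOf_eq]
            tauto
          simp only [hzero, lintegral_zero]
          exact zero_le
    _ = E := by
        rw [lintegral_indicator_const measurableSet_Ioo E, Real.volume_Ioo]
        norm_num
    _ = ENNReal.ofReal 1 * E := by rw [ENNReal.ofReal_one, one_mul]
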